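/- arXiv:2204.01908 — 6 statements merged into one kernel-verified Lean document; each statement's English description precedes it below -/
import Mathlib

section
/- In the distance-restricted firefighter game with parameter d = 2 on the half grid (vertex set ℤ×ℕ with square-grid adjacency), two firefighters can contain any fire whose initial set of burning vertices is finite. -/
/- Distance-restricted firefighter game (Burgess, Marcoux, Pike, arXiv:2204.01908).

At time 0 a fire breaks out at the set `F` of vertices and each firefighter is placed on
(protects) a vertex not in `F`.  At each subsequent time step the fire spreads to every
unburnt, unprotected neighbour of a burning vertex, and then each firefighter moves to a
vertex at distance at most `d` from its current vertex in the subgraph induced by the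
unburnt vertices (i.e. along a walk of length ≤ `d` through unburnt vertices).
Occupied vertices are protected forever.  The fire is contained if the burnt set
stabilizes after finitely many steps. -/

namespace Firefight

variable {V : Type*}

/-- There is a walk in `G` from `u` to `v` of length at most `d` all of whose vertices
(including the endpoints) lie in `S`. -/
def ReachWithin (G : SimpleGraph V) (S : Set V) (d : ℕ) (u v : V) : Prop :=
  ∃ p : G.Walk u v, p.length ≤ d ∧ ∀ x ∈ p.support, x ∈ S

/-- The set of burnt vertices at each time: `F` is the set initially on fire, and
`prot t` is the set of vertices that are protected when the fire spreads at step `t+1`. -/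
def burnt (G : SimpleGraph V) (F : Set V) (prot : ℕ → Set V) : ℕ → Set V
  | 0 => F
  | t + 1 => burnt G F prot t ∪ {v | v ∉ prot t ∧ ∃ w ∈ burnt G F prot t, G.Adj w v}

/-- The set of vertices protected by time `t`: all vertices occupied by some firefighter
at some time `s ≤ t`, where `pos s i` is the vertex occupied by firefighter `i` at time `s`. -/
def protOf {k : ℕ} (pos : ℕ → Fin k → V) (t : ℕ) : Set V :=
  {v | ∃ s ≤ t, ∃ i, pos s i = v}

/-- `k` firefighters, each moving distance at most `d` per turn within the unburnt subgraph,
can contain a fire starting at `F`, the burnt set stabilizing by time `T`. -/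
def CanContainIn (G : SimpleGraph V) (d k : ℕ) (F : Set V) (T : ℕ) : Prop :=
  ∃ pos : ℕ → Fin k → V,
    (∀ i, pos 0 i ∉ F) ∧
    (∀ t i, ReachWithin G (burnt G F (protOf pos) (t + 1))ᶜ d (pos t i) (pos (t + 1) i)) ∧
    ∀ t, burnt G F (protOf pos) t ⊆ burnt G F (protOf pos) T

/-- `k` firefighters, each moving distance at most `d` per turn within the unburnt subgraph,
can contain a fire starting at `F`. -/
def CanContain (G : SimpleGraph V) (d k : ℕ) (F : Set V) : Prop :=
  ∃ T, CanContainIn G d k F T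

/-- The distance-restricted firefighter number `f_d(G,u)`: the least number of firefighters
that can contain a fire starting at `u` in the distance-`d` game. -/
noncomputable def fdNum (G : SimpleGraph V) (d : ℕ) (u : V) : ℕ :=
  sInf {k | CanContain G d k {u}}

/-- The half grid: vertex set `ℤ × ℕ` with square-grid adjacency. -/
def halfGrid : SimpleGraph (ℤ × ℕ) :=
  SimpleGraph.fromRel (fun p q => |p.1 - q.1| + |(p.2 : ℤ) - (q.2 : ℤ)| = 1)

/-!
The fire starts inside a box `[-m, m] × [0, m]` and spreads at speed at most one, so it needs
`boxDist m p` steps to reach a cell `p`. The two firefighters build a wall around the box (up a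
column, across a row, down another column) by walking along it two cells per step each, on
alternate cells; so the frontier of the wall advances two cells per step, which outpaces the
fire: every wall cell is occupied before the fire can reach it. The wall therefore never burns,
the fire stays in the finite region it encloses, and the burnt set, being monotone, stabilizes.
-/

theorem _root_.Set.exists_forall_subset_of_monotone {α : Type*} {s : ℕ → Set α}
    (hs : Monotone s) {S : Set α} (hS : S.Finite) (hsS : ∀ t, s t ⊆ S) :
    ∃ T, ∀ t, s t ⊆ s T := by
  have hrange : (s '' Set.univ).Finite :=
    hS.finite_subsets.subset (by rintro _ ⟨t, -, rfl⟩; exact hsS t)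
  obtain ⟨T, -, hT⟩ := Set.Finite.exists_maximalFor' s Set.univ hrange Set.univ_nonempty
  exact ⟨T, fun t => (hs (le_max_left t T)).trans
    (hT (Set.mem_univ _) (hs (le_max_right t T)))⟩

section Burnt

variable {G : SimpleGraph V} {F : Set V} {prot : ℕ → Set V}

theorem mem_burnt_succ {t : ℕ} {v : V} :
    v ∈ burnt G F prot (t + 1) ↔
      v ∈ burnt G F prot t ∨ v ∉ prot t ∧ ∃ w ∈ burnt G F prot t, G.Adj w v :=
  Iff.rfl

theorem burnt_monotone : Monotone (burnt G F prot) :=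
  monotone_nat_of_le_succ fun _ => Set.subset_union_left

theorem protOf_monotone {k : ℕ} (pos : ℕ → Fin k → V) : Monotone (protOf pos) :=
  fun _ _ hst _ ⟨s, hs, i, hi⟩ => ⟨s, hs.trans hst, i, hi⟩

theorem le_of_mem_burnt (D : V → ℕ) (hD : ∀ w v, G.Adj w v → D v ≤ D w + 1)
    (hF : ∀ v ∈ F, D v = 0) {t : ℕ} {v : V} (hv : v ∈ burnt G F prot t) : D v ≤ t := by
  induction t generalizing v with
  | zero => exact (hF v hv).le
  | succ t ih =>
    rcases mem_burnt_succ.1 hv with hv | ⟨-, w, hw, hwv⟩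
    · exact (ih hv).trans t.le_succ
    · exact (hD w v hwv).trans (Nat.succ_le_succ (ih hw))

theorem not_mem_burnt_of_mem_prot (hprot : Monotone prot) (D : V → ℕ)
    (hD : ∀ w v, G.Adj w v → D v ≤ D w + 1) (hF : ∀ v ∈ F, D v = 0) {v : V} {τ : ℕ}
    (hv : v ∈ prot τ) (hτ : τ < D v) (t : ℕ) : v ∉ burnt G F prot t := by
  intro hburnt
  have hDv := le_of_mem_burnt D hD hF hburnt
  induction t with
  | zero => omega
  | succ t ih =>
    rcases mem_burnt_succ.1 hburnt with hburnt | ⟨hunprot, -⟩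
    · exact ih hburnt (le_of_mem_burnt D hD hF hburnt)
    · exact hunprot (hprot (by omega) hv)

theorem burnt_subset_of_neighbors_not_mem_burnt {I : Set V} (hF : F ⊆ I)
    (hI : ∀ w ∈ I, ∀ v, G.Adj w v → v ∉ I → ∀ t, v ∉ burnt G F prot t) (t : ℕ) :
    burnt G F prot t ⊆ I := by
  induction t with
  | zero => exact hF
  | succ t ih =>
    intro v hv
    rcases mem_burnt_succ.1 hv with hv' | ⟨-, w, hw, hwv⟩
    · exact ih hv'
    · by_contra hvI
      exact hI w (ih hw) v hwv hvI (t + 1) hv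

end Burnt

theorem reachWithin_of_chain {G : SimpleGraph V} {S : Set V} {f : ℕ → V}
    (hf : ∀ ℓ, f ℓ = f (ℓ + 1) ∨ G.Adj (f ℓ) (f (ℓ + 1))) (hS : ∀ ℓ, f ℓ ∈ S) (a n : ℕ) :
    ReachWithin G S n (f a) (f (a + n)) := by
  induction n with
  | zero => exact ⟨.nil, le_rfl, by simpa using hS a⟩
  | succ n ih =>
    obtain ⟨p, hlen, hsupp⟩ := ih
    rcases hf (a + n) with heq | hadj
    · exact ⟨p.copy rfl heq, by simpa using hlen.trans n.le_succ, by simpa using hsupp⟩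
    · refine ⟨p.concat hadj, by simpa using hlen, ?_⟩
      simp only [SimpleGraph.Walk.support_concat, List.mem_append, List.mem_singleton]
      rintro x (hx | rfl)
      exacts [hsupp x hx, hS _]

theorem canContain_of_burnt_subset_finite {G : SimpleGraph V} {F : Set V} {d k : ℕ}
    {pos : ℕ → Fin k → V} (hstart : ∀ i, pos 0 i ∉ F)
    (hmove : ∀ t i, ReachWithin G (burnt G F (protOf pos) (t + 1))ᶜ d (pos t i) (pos (t + 1) i))
    {S : Set V} (hS : S.Finite) (hsub : ∀ t, burnt G F (protOf pos) t ⊆ S) :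
    CanContain G d k F :=
  let ⟨T, hT⟩ := Set.exists_forall_subset_of_monotone burnt_monotone hS hsub
  ⟨T, pos, hstart, hmove, hT⟩

theorem halfGrid_adj_iff {p q : ℤ × ℕ} : halfGrid.Adj p q ↔
    p.1 = q.1 ∧ (p.2 = q.2 + 1 ∨ q.2 = p.2 + 1) ∨
      p.2 = q.2 ∧ (p.1 = q.1 + 1 ∨ q.1 = p.1 + 1) := by
  rw [halfGrid, SimpleGraph.fromRel_adj, abs_sub_comm q.1, abs_sub_comm (q.2 : ℤ), or_self,
    ne_eq, Prod.ext_iff]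
  rcases abs_cases (p.1 - q.1) with ⟨h1, _⟩ | ⟨h1, _⟩ <;>
  rcases abs_cases ((p.2 : ℤ) - q.2) with ⟨h2, _⟩ | ⟨h2, _⟩ <;>
  rw [h1, h2] <;> omega

/-- A lower bound on the time a fire started in `[-m, m] × [0, m]` needs to reach `p`. -/
def boxDist (m : ℕ) (p : ℤ × ℕ) : ℕ := (p.1.natAbs - m) + (p.2 - m)

theorem boxDist_le_of_adj (m : ℕ) {p q : ℤ × ℕ} (h : halfGrid.Adj p q) :
    boxDist m q ≤ boxDist m p + 1 := by
  unfold boxDist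
  rcases halfGrid_adj_iff.1 h with ⟨_, _ | _⟩ | ⟨_, _ | _⟩ <;> omega

theorem exists_boxDist_eq_zero {F : Set (ℤ × ℕ)} (hF : F.Finite) :
    ∃ m, 1 ≤ m ∧ ∀ p ∈ F, boxDist m p = 0 := by
  obtain ⟨m, hm⟩ := (hF.image fun p => p.1.natAbs + p.2).bddAbove
  refine ⟨m + 1, Nat.le_add_left 1 m, fun p hp => ?_⟩
  have := hm (Set.mem_image_of_mem _ hp)
  simp only [boxDist]
  omega

/-- Beyond `ℓ = 76m` the wall stays at its last cell `(-40m, 0)`, since `76m - ℓ` truncates. -/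
def wall (m ℓ : ℕ) : ℤ × ℕ :=
  if ℓ ≤ 14 * m then (8 * m, ℓ)
  else if ℓ ≤ 62 * m then (22 * m - ℓ, 14 * m)
  else (-(40 * m), 76 * m - ℓ)

theorem wall_eq_or_adj (m ℓ : ℕ) :
    wall m ℓ = wall m (ℓ + 1) ∨ halfGrid.Adj (wall m ℓ) (wall m (ℓ + 1)) := by
  rw [halfGrid_adj_iff, Prod.ext_iff]
  unfold wall
  split_ifs <;> omega

theorem wall_min (m ℓ : ℕ) : wall m (min ℓ (76 * m)) = wall m ℓ := by
  rcases le_total ℓ (76 * m) with h | h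
  · rw [min_eq_left h]
  · rw [min_eq_right h]
    unfold wall
    split_ifs <;> ext <;> simp only <;> omega

def wallPos (m : ℕ) (t : ℕ) (i : Fin 2) : ℤ × ℕ := wall m (2 * t + i)

theorem wall_mem_protOf (m ℓ : ℕ) : wall m ℓ ∈ protOf (wallPos m) (ℓ / 2) :=
  ⟨ℓ / 2, le_rfl, ⟨ℓ % 2, Nat.mod_lt ℓ two_pos⟩, congrArg (wall m) (Nat.div_add_mod ℓ 2)⟩

theorem min_div_two_lt_boxDist_wall {m : ℕ} (hm : 1 ≤ m) (ℓ : ℕ) :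
    min ℓ (76 * m) / 2 < boxDist m (wall m ℓ) := by
  unfold wall boxDist
  split_ifs <;> omega

theorem wall_not_mem_burnt {m : ℕ} (hm : 1 ≤ m) {F : Set (ℤ × ℕ)}
    (hF : ∀ p ∈ F, boxDist m p = 0) (ℓ t : ℕ) :
    wall m ℓ ∉ burnt halfGrid F (protOf (wallPos m)) t := by
  refine not_mem_burnt_of_mem_prot (protOf_monotone _) (boxDist m)
    (fun _ _ => boxDist_le_of_adj m) hF ?_ (min_div_two_lt_boxDist_wall hm ℓ) t
  simpa only [wall_min] using wall_mem_protOf m (min ℓ (76 * m))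

def inside (m : ℕ) : Set (ℤ × ℕ) := {p | -(40 * m : ℤ) < p.1 ∧ p.1 < 8 * m ∧ p.2 < 14 * m}

theorem inside_finite (m : ℕ) : (inside m).Finite :=
  ((Set.finite_Icc (-(40 * m : ℤ)) (8 * m)).prod (Set.finite_Iic (14 * m))).subset
    fun _ ⟨h1, h2, h3⟩ => ⟨⟨h1.le, h2.le⟩, h3.le⟩

theorem mem_inside_of_boxDist_eq_zero {m : ℕ} (hm : 1 ≤ m) {p : ℤ × ℕ}
    (hp : boxDist m p = 0) : p ∈ inside m := by
  simp only [boxDist, inside, Set.mem_ofPred_eq] at hp ⊢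
  omega

theorem exists_wall_eq_of_adj_inside {m : ℕ} {p q : ℤ × ℕ} (hp : p ∈ inside m)
    (hpq : halfGrid.Adj p q) (hq : q ∉ inside m) : ∃ ℓ, wall m ℓ = q := by
  obtain ⟨h1, h2, h3⟩ := hp
  simp only [inside, Set.mem_ofPred_eq, not_and_or, not_lt] at hq
  have hadj := halfGrid_adj_iff.1 hpq
  by_cases hright : q.1 = 8 * m
  · exact ⟨q.2, by simp only [wall, Prod.ext_iff]; split_ifs <;> omega⟩
  by_cases hleft : q.1 = -(40 * m)
  · exact ⟨76 * m - q.2, by simp only [wall, Prod.ext_iff]; split_ifs <;> omega⟩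
  · exact ⟨(22 * m - q.1).toNat, by simp only [wall, Prod.ext_iff]; split_ifs <;> omega⟩

/-- In the distance-restricted game with `d = 2` on the half grid, two firefighters can
contain any fire whose initial set of burning vertices is finite. -/
theorem half_grid_d2_finite_fire :
    ∀ F : Set (ℤ × ℕ), F.Finite → CanContain halfGrid 2 2 F := by
  intro F hF
  obtain ⟨m, hm, hF0⟩ := exists_boxDist_eq_zero hF
  have hsafe := wall_not_mem_burnt hm hF0
  have hmove : ∀ t i, ReachWithin halfGrid (burnt halfGrid F (protOf (wallPos m)) (t + 1))ᶜ 2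
      (wallPos m t i) (wallPos m (t + 1) i) := by
    intro t i
    rw [wallPos, wallPos, show 2 * (t + 1) + (i : ℕ) = 2 * t + i + 2 by ring]
    exact reachWithin_of_chain (wall_eq_or_adj m) (fun ℓ => hsafe ℓ (t + 1)) _ 2
  have hinside : ∀ t, burnt halfGrid F (protOf (wallPos m)) t ⊆ inside m := by
    refine burnt_subset_of_neighbors_not_mem_burnt
      (fun p hp => mem_inside_of_boxDist_eq_zero hm (hF0 p hp)) fun p hp q hpq hq => ?_
    obtain ⟨ℓ, rfl⟩ := exists_wall_eq_of_adj_inside hp hpq hq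
    exact hsafe ℓ
  exact canContain_of_burnt_subset_finite (fun i => hsafe _ 0) hmove (inside_finite m) hinside

end Firefight
end

section
/- In the distance-restricted firefighter game with parameter d = 1 on the infinite hexagonal grid, three firefighters are necessary and sufficient to contain the fire; that is, f_1(G_hex) = 3. -/
/- Distance-restricted firefighter game (Burgess, Marcoux, Pike, arXiv:2204.01908).

At time 0 a fire breaks out at the set `F` of vertices and each firefighter is placed on
(protects) a vertex not in `F`.  At each subsequent time step the fire spreads to every
unburnt, unprotected neighbour of a burning vertex, and then each firefighter moves to a
vertex at distance at most `d` from its current vertex in the subgraph induced by the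
unburnt vertices (i.e. along a walk of length ≤ `d` through unburnt vertices).
Occupied vertices are protected forever.  The fire is contained if the burnt set
stabilizes after finitely many steps. -/

namespace Firefight

variable {V : Type*}

/-- The infinite hexagonal grid: vertex set `ℤ × ℤ`, with `(x,y)` adjacent to `(x±1,y)`
for all `x, y`, and `(x,y)` adjacent to `(x,y+1)` exactly when `x + y` is even. -/
def hexGrid : SimpleGraph (ℤ × ℤ) :=
  SimpleGraph.fromRel (fun p q =>
    (p.2 = q.2 ∧ |p.1 - q.1| = 1) ∨ (p.1 = q.1 ∧ Even (p.1 + p.2) ∧ q.2 = p.2 + 1))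


end Firefight

/-! Three firefighters on the three neighbours of `u` stop the fire at once. Conversely, the fire
moves as fast as the firefighters, so it reaches any vertex `w` along a geodesic unless some
firefighter starts strictly closer to `w` than `u`. For two firefighters at `a` and `b` there are
arbitrarily distant `w` with `d(u, w) ≤ d(a, w)` and `d(u, w) ≤ d(b, w)`: the potentials `x + y`,
`x - y` and a parity-corrected `2y` change by at most one along edges, so if `w` is reached from
`u` along a geodesic on which two of them grow at unit rate, every point on the far side of `u`
for one of them is no closer to `w` than `u`; four directions of this kind cover every pair. -/

namespace SimpleGraph

variable {V : Type*} {G : SimpleGraph V}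

lemma Connected.dist_le_mul_of_dist_succ_le (hG : G.Connected) {c : ℕ} (x : ℕ → V)
    (h : ∀ m, G.dist (x m) (x (m + 1)) ≤ c) (n : ℕ) : G.dist (x 0) (x n) ≤ c * n := by
  induction n with
  | zero => simp
  | succ n ih =>
    calc G.dist (x 0) (x (n + 1)) ≤ G.dist (x 0) (x n) + G.dist (x n) (x (n + 1)) :=
          hG.dist_triangle
      _ ≤ c * n + c := add_le_add ih (h n)
      _ = c * (n + 1) := by ring

lemma reachable_of_forall_reachable_add_one (x : ℤ → V)
    (h : ∀ m, G.Reachable (x m) (x (m + 1))) (m n : ℤ) : G.Reachable (x m) (x n) := by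
  suffices hx0 : ∀ n, G.Reachable (x 0) (x n) from (hx0 m).symm.trans (hx0 n)
  intro n
  induction n using Int.induction_on with
  | zero => rfl
  | succ i ih => exact ih.trans (h i)
  | pred i ih => exact ih.trans (by simpa using (h (-i - 1)).symm)

lemma Connected.exists_adj_dist_add_one (hG : G.Connected) {v w : V} (hvw : v ≠ w) :
    ∃ v', G.Adj v v' ∧ G.dist v' w + 1 = G.dist v w := by
  obtain ⟨p, hp⟩ := hG.exists_walk_length_eq_dist v w
  cases p with
  | nil => exact absurd rfl hvw
  | cons hvv' q =>
    refine ⟨_, hvv', le_antisymm ?_ ?_⟩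
    · rw [← hp, Walk.length_cons]
      exact Nat.add_le_add_right (dist_le q) 1
    · calc G.dist v w ≤ G.dist v _ + G.dist _ w := hG.dist_triangle
        _ = G.dist _ w + 1 := by rw [dist_eq_one_iff_adj.2 hvv', add_comm]

lemma dist_le_two_of_adj_of_adj {p q r : V} (hpq : G.Adj p q) (hqr : G.Adj q r) :
    G.dist p r ≤ 2 :=
  dist_le (hpq.toWalk.concat hqr)

def EdgeLipschitz (G : SimpleGraph V) (f : V → ℤ) : Prop :=
  ∀ ⦃p q⦄, G.Adj p q → f q ≤ f p + 1

namespace EdgeLipschitz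

variable {f : V → ℤ}

lemma neg (hf : EdgeLipschitz G f) : EdgeLipschitz G (fun p => -f p) :=
  fun _ _ h => by linarith [hf h.symm]

lemma sub_le_length (hf : EdgeLipschitz G f) {p q : V} (w : G.Walk p q) :
    f q - f p ≤ w.length := by
  induction w with
  | nil => simp
  | cons h _ ih =>
    rw [Walk.length_cons]
    push_cast
    linarith [hf h]

lemma sub_le_dist (hf : EdgeLipschitz G f) {p q : V} (h : G.Reachable p q) :
    f q - f p ≤ G.dist p q := by
  obtain ⟨w, hw⟩ := h.exists_walk_length_eq_dist
  exact hw ▸ hf.sub_le_length w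

lemma dist_le_dist (hf : EdgeLipschitz G f) (hG : G.Connected) {u w p : V}
    (hw : (G.dist u w : ℤ) ≤ f w - f u) (hp : f p ≤ f u) : G.dist u w ≤ G.dist p w := by
  have := hf.sub_le_dist (hG p w)
  omega

lemma le_dist_and_forall_dist_le_dist {g : V → ℤ} (hf : EdgeLipschitz G f) (hg : EdgeLipschitz G g)
    (hG : G.Connected) (u w : V) (n : ℕ) (hwf : (G.dist u w : ℤ) ≤ f w - f u)
    (hwg : (G.dist u w : ℤ) ≤ g w - g u) (hn : n ≤ f w - f u) :
    n ≤ G.dist u w ∧ ∀ p, f p ≤ f u ∨ g p ≤ g u → G.dist u w ≤ G.dist p w := by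
  refine ⟨?_, fun p hp => hp.elim (hf.dist_le_dist hG hwf) (hg.dist_le_dist hG hwg)⟩
  have := hf.sub_le_dist (hG u w)
  omega

end EdgeLipschitz

end SimpleGraph

namespace Firefight

open SimpleGraph

section General

variable {V : Type*} {G : SimpleGraph V}

lemma ReachWithin.dist_le {S : Set V} {d : ℕ} {u v : V} (h : ReachWithin G S d u v) :
    G.dist u v ≤ d :=
  let ⟨p, hp, _⟩ := h
  (SimpleGraph.dist_le p).trans hp

lemma dist_le_of_mem_burnt (hG : G.Connected) {u v : V} {prot : ℕ → Set V} {t : ℕ}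
    (hv : v ∈ burnt G {u} prot t) : G.dist u v ≤ t := by
  induction t generalizing v with
  | zero => rw [show v = u from hv, dist_self]
  | succ t ih =>
    rcases hv with hv | ⟨-, w, hw, hwv⟩
    · exact (ih hv).trans t.le_succ
    · calc G.dist u v ≤ G.dist u w + G.dist w v := hG.dist_triangle
        _ ≤ t + 1 := add_le_add (ih hw) (dist_eq_one_iff_adj.2 hwv).le

/-- The fire front advances along a geodesic to `w`; a firefighter standing on it at time `s`
would have started strictly closer to `w` than `u`. -/
lemma mem_burnt_dist_of_forall_dist_le (hG : G.Connected) {k : ℕ} {pos : ℕ → Fin k → V}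
    (hspeed : ∀ s i, G.dist (pos 0 i) (pos s i) ≤ s) {u w : V}
    (hfar : ∀ i, G.dist u w ≤ G.dist (pos 0 i) w) :
    w ∈ burnt G {u} (protOf pos) (G.dist u w) := by
  have front : ∀ t ≤ G.dist u w,
      ∃ v ∈ burnt G {u} (protOf pos) t, G.dist v w + t = G.dist u w := by
    intro t ht
    induction t with
    | zero => exact ⟨u, rfl, rfl⟩
    | succ t ih =>
      obtain ⟨v, hv, hvw⟩ := ih (by omega)
      obtain ⟨v', hvv', hv'w⟩ := hG.exists_adj_dist_add_one
        (fun h : v = w => by rw [h, dist_self] at hvw; omega)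
      refine ⟨v', Or.inr ⟨?_, v, hv, hvv'⟩, by omega⟩
      rintro ⟨s, hs, i, rfl⟩
      have := hspeed s i
      have := hfar i
      have : G.dist (pos 0 i) w ≤ G.dist (pos 0 i) (pos s i) + G.dist (pos s i) w :=
        hG.dist_triangle
      omega
  obtain ⟨v, hv, hvw⟩ := front _ le_rfl
  obtain rfl : v = w := hG.dist_eq_zero_iff.1 (by omega)
  exact hv

theorem CanContainIn.exists_dist_lt (hG : G.Connected) {k T : ℕ} {u : V}
    (h : CanContainIn G 1 k {u} T) :
    ∃ start : Fin k → V, ∀ w, T < G.dist u w → ∃ i, G.dist (start i) w < G.dist u w := by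
  obtain ⟨pos, -, hmove, hcont⟩ := h
  refine ⟨pos 0, fun w hw => ?_⟩
  by_contra! hfar
  have hspeed (s : ℕ) (i : Fin k) : G.dist (pos 0 i) (pos s i) ≤ s := by
    simpa using hG.dist_le_mul_of_dist_succ_le (fun s => pos s i)
      (fun s => (hmove s i).dist_le) s
  have := dist_le_of_mem_burnt hG (hcont _ (mem_burnt_dist_of_forall_dist_le hG hspeed hfar))
  omega

theorem canContainIn_of_neighborSet_subset {d k : ℕ} {u : V} (nbr : Fin k → V)
    (hu : u ∉ Set.range nbr) (hN : G.neighborSet u ⊆ Set.range nbr) :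
    CanContainIn G d k {u} 0 := by
  have hburnt (t : ℕ) : burnt G {u} (protOf fun _ => nbr) t = {u} := by
    induction t with
    | zero => rfl
    | succ t ih =>
      refine le_antisymm ?_ (ih.symm.subset.trans Set.subset_union_left)
      rintro v (hv | ⟨hvp, w, hw, hwv⟩)
      · rwa [ih] at hv
      · rw [ih, Set.mem_singleton_iff] at hw
        subst hw
        obtain ⟨i, rfl⟩ := hN hwv
        exact absurd ⟨0, t.zero_le, i, rfl⟩ hvp
  refine ⟨fun _ => nbr, fun i hi => hu ⟨i, hi⟩, fun t i => ⟨Walk.nil, Nat.zero_le _, ?_⟩,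
    fun t => by rw [hburnt, hburnt]⟩
  simp only [Walk.support_nil, List.mem_singleton, forall_eq, hburnt, Set.mem_compl_iff,
    Set.mem_singleton_iff]
  exact fun hi => hu ⟨i, hi⟩

lemma exists_pair_forall_eq_or_eq {α : Type*} (a₀ : α) {k : ℕ} (hk : k ≤ 2) (f : Fin k → α) :
    ∃ a b, ∀ i, f i = a ∨ f i = b := by
  interval_cases k
  · exact ⟨a₀, a₀, fun i => i.elim0⟩
  · exact ⟨f 0, f 0, fun i => Or.inl (congrArg f (Subsingleton.elim i 0))⟩
  · exact ⟨f 0, f 1, fun i => by fin_cases i <;> simp⟩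

end General

lemma hexGrid_adj_iff {p q : ℤ × ℤ} :
    hexGrid.Adj p q ↔ p.2 = q.2 ∧ (q.1 = p.1 + 1 ∨ p.1 = q.1 + 1) ∨
      p.1 = q.1 ∧ ((p.1 + p.2) % 2 = 0 ∧ q.2 = p.2 + 1 ∨ (q.1 + q.2) % 2 = 0 ∧ p.2 = q.2 + 1) := by
  obtain ⟨a, b⟩ := p
  obtain ⟨c, d⟩ := q
  simp only [hexGrid, fromRel_adj, ne_eq, Prod.mk.injEq, Int.even_iff,
    abs_eq zero_le_one]
  omega

lemma hexGrid_adj_right (x y : ℤ) : hexGrid.Adj (x, y) (x + 1, y) := by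
  rw [hexGrid_adj_iff]
  omega

lemma hexGrid_adj_up {x y : ℤ} (h : (x + y) % 2 = 0) : hexGrid.Adj (x, y) (x, y + 1) := by
  rw [hexGrid_adj_iff]
  omega

lemma hexGrid_reachable_up (x y : ℤ) : hexGrid.Reachable (x, y) (x, y + 1) := by
  by_cases h : (x + y) % 2 = 0
  · exact (hexGrid_adj_up h).reachable
  · have hup := (hexGrid_adj_up (x := x + 1) (y := y) (by omega)).reachable
    have hleft := (hexGrid_adj_right x (y + 1)).reachable.symm
    exact (hexGrid_adj_right x y).reachable.trans (hup.trans hleft)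

lemma hexGrid_connected : hexGrid.Connected := by
  refine (connected_iff _).2 ⟨fun ⟨x, y⟩ ⟨x', y'⟩ => ?_, ⟨(0, 0)⟩⟩
  have horizontal := reachable_of_forall_reachable_add_one (fun m => (m, y))
    (fun m => (hexGrid_adj_right m y).reachable) x x'
  have vertical := reachable_of_forall_reachable_add_one (fun m => (x', m))
    (fun m => hexGrid_reachable_up x' m) y y'
  exact horizontal.trans vertical

lemma edgeLipschitz_fst_add_snd : EdgeLipschitz hexGrid (fun p => p.1 + p.2) := by
  intro p q h
  rw [hexGrid_adj_iff] at h
  dsimp only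
  omega

lemma edgeLipschitz_fst_sub_snd : EdgeLipschitz hexGrid (fun p => p.1 - p.2) := by
  intro p q h
  rw [hexGrid_adj_iff] at h
  dsimp only
  omega

/-- Roughly twice the height; the parity term makes every edge change it by exactly one. -/
def hexLevel (p : ℤ × ℤ) : ℤ := 2 * p.2 + 1 - (p.1 + p.2) % 2

lemma edgeLipschitz_hexLevel : EdgeLipschitz hexGrid hexLevel := by
  intro p q h
  rw [hexGrid_adj_iff] at h
  simp only [hexLevel]
  omega

lemma hexGrid_dist_le_mul_of_step {a b : ℤ} {c : ℕ}
    (h : ∀ x y, hexGrid.dist (x, y) (x + a, y + b) ≤ c) (x y : ℤ) (n : ℕ) :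
    hexGrid.dist (x, y) (x + n * a, y + n * b) ≤ c * n := by
  simpa using hexGrid_connected.dist_le_mul_of_dist_succ_le (fun m => (x + m * a, y + m * b))
    (fun m => by simpa [add_mul, add_assoc] using h (x + m * a) (y + m * b)) n

lemma hexGrid_dist_horizontal_le (x y : ℤ) {a : ℤ} (ha : a = 1 ∨ a = -1) :
    hexGrid.dist (x, y) (x + a, y + 0) ≤ 1 :=
  (dist_eq_one_iff_adj.2 (by rw [hexGrid_adj_iff]; omega)).le

lemma hexGrid_dist_diagonal_le (x y : ℤ) {b : ℤ} (hb : b = 1 ∨ b = -1) :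
    hexGrid.dist (x, y) (x + 1, y + b) ≤ 2 := by
  by_cases h : (x + y) % 2 = 0 ↔ b = 1
  · exact dist_le_two_of_adj_of_adj (q := (x, y + b))
      (by rw [hexGrid_adj_iff]; omega) (by rw [hexGrid_adj_iff]; omega)
  · exact dist_le_two_of_adj_of_adj (q := (x + 1, y))
      (by rw [hexGrid_adj_iff]; omega) (by rw [hexGrid_adj_iff]; omega)

lemma hexGrid_exists_far_vertex_dist_le_dist (u a b : ℤ × ℤ) (n : ℕ) :
    ∃ w, n ≤ hexGrid.dist u w ∧ hexGrid.dist u w ≤ hexGrid.dist a w ∧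
      hexGrid.dist u w ≤ hexGrid.dist b w := by
  have hσ := edgeLipschitz_fst_add_snd
  have hδ := edgeLipschitz_fst_sub_snd
  have hL := edgeLipschitz_hexLevel
  have hG := hexGrid_connected
  obtain ⟨x, y⟩ := u
  have dE := hexGrid_dist_le_mul_of_step (hexGrid_dist_horizontal_le · · (.inl rfl)) x y n
  have dW := hexGrid_dist_le_mul_of_step (hexGrid_dist_horizontal_le · · (.inr rfl)) x y n
  have dNE := hexGrid_dist_le_mul_of_step (hexGrid_dist_diagonal_le · · (.inl rfl)) x y n
  have dSE := hexGrid_dist_le_mul_of_step (hexGrid_dist_diagonal_le · · (.inr rfl)) x y n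
  obtain ⟨farE, east⟩ :=
    hσ.le_dist_and_forall_dist_le_dist hδ hG (x, y) (x + n * 1, y + n * 0) n
    (by omega) (by omega) (by omega)
  obtain ⟨farW, west⟩ :=
    hσ.neg.le_dist_and_forall_dist_le_dist hδ.neg hG (x, y) (x + n * -1, y + n * 0) n
    (by omega) (by omega) (by omega)
  obtain ⟨farNE, northEast⟩ :=
    hσ.le_dist_and_forall_dist_le_dist hL hG (x, y) (x + n * 1, y + n * 1) n
    (by omega) (by simp only [hexLevel]; omega) (by omega)
  obtain ⟨farSE, southEast⟩ :=
    hδ.le_dist_and_forall_dist_le_dist hL.neg hG (x, y) (x + n * 1, y + n * -1) n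
    (by omega) (by simp only [hexLevel]; omega) (by omega)
  -- If the east target fails, WLOG because of `a`, which then lies strictly beyond `u` in both
  -- `x + y` and `x - y`, so the west target works for `a`. If that fails for `b`, then `b` lies
  -- strictly below `u` in both, so the north-east and south-east targets work for `b`, and
  -- `hexLevel a` decides which of them works for `a`.
  by_cases hE : (a.1 + a.2 ≤ x + y ∨ a.1 - a.2 ≤ x - y) ∧
      (b.1 + b.2 ≤ x + y ∨ b.1 - b.2 ≤ x - y)
  · exact ⟨_, farE, east a hE.1, east b hE.2⟩
  wlog ha : x + y < a.1 + a.2 ∧ x - y < a.1 - a.2 generalizing a b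
  · obtain ⟨w, hw⟩ := this b a (by tauto) (by omega)
    exact ⟨w, hw.1, hw.2.2, hw.2.1⟩
  by_cases hW : x + y ≤ b.1 + b.2 ∨ x - y ≤ b.1 - b.2
  · exact ⟨_, farW, west a (by omega), west b (by omega)⟩
  by_cases hLa : hexLevel a ≤ hexLevel (x, y)
  · exact ⟨_, farNE, northEast a (.inr hLa), northEast b (.inl (by omega))⟩
  · exact ⟨_, farSE, southEast a (.inr (by omega)), southEast b (.inl (by omega))⟩

lemma not_canContain_hexGrid {k : ℕ} (hk : k ≤ 2) (u : ℤ × ℤ) :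
    ¬CanContain hexGrid 1 k {u} := by
  rintro ⟨T, hT⟩
  obtain ⟨start, hstart⟩ := hT.exists_dist_lt hexGrid_connected
  obtain ⟨a, b, hab⟩ := exists_pair_forall_eq_or_eq u hk start
  obtain ⟨w, hw, haw, hbw⟩ := hexGrid_exists_far_vertex_dist_le_dist u a b (T + 1)
  obtain ⟨i, hi⟩ := hstart w hw
  rcases hab i with h | h <;> rw [h] at hi <;> omega

def hexNeighbors (p : ℤ × ℤ) : Fin 3 → ℤ × ℤ :=
  ![(p.1 + 1, p.2), (p.1 - 1, p.2), (p.1, if (p.1 + p.2) % 2 = 0 then p.2 + 1 else p.2 - 1)]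

lemma neighborSet_hexGrid_subset_range (p : ℤ × ℤ) :
    hexGrid.neighborSet p ⊆ Set.range (hexNeighbors p) := by
  intro q hq
  rw [mem_neighborSet, hexGrid_adj_iff] at hq
  simp only [hexNeighbors, Matrix.range_cons, Matrix.range_empty, Set.union_empty, Set.mem_union,
    Set.mem_singleton_iff, Prod.ext_iff]
  split_ifs <;> omega

lemma self_notMem_range_hexNeighbors (p : ℤ × ℤ) : p ∉ Set.range (hexNeighbors p) := by
  simp only [hexNeighbors, Matrix.range_cons, Matrix.range_empty, Set.union_empty, Set.mem_union,
    Set.mem_singleton_iff, Prod.ext_iff]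
  split_ifs <;> omega

lemma canContain_hexGrid_three (u : ℤ × ℤ) : CanContain hexGrid 1 3 {u} :=
  ⟨0, canContainIn_of_neighborSet_subset _ (self_notMem_range_hexNeighbors u)
    (neighborSet_hexGrid_subset_range u)⟩

/-- In the distance-restricted game with `d = 1` on the infinite hexagonal grid, three
firefighters are necessary and sufficient: `f_1(G_hex) = 3`. -/
theorem hex_grid_d1 :
    ∀ u : ℤ × ℤ, fdNum hexGrid 1 u = 3 := by
  intro u
  refine le_antisymm (Nat.sInf_le (canContain_hexGrid_three u)) ?_
  refine le_csInf ⟨3, canContain_hexGrid_three u⟩ fun k hk => ?_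
  by_contra! hk3
  exact not_canContain_hexGrid (by omega) u hk

end Firefight
end

section
/- For every integer d ≥ 1, in the distance-restricted firefighter game with parameter d on the two-way infinite path (vertex set ℤ with i adjacent to i+1), two firefighters can contain a fire starting at any vertex, but one firefighter cannot; that is, f_d equals 2 for the two-way infinite path for every d. -/
/- Distance-restricted firefighter game (Burgess, Marcoux, Pike, arXiv:2204.01908).

At time 0 a fire breaks out at the set `F` of vertices and each firefighter is placed on
(protects) a vertex not in `F`.  At each subsequent time step the fire spreads to every
unburnt, unprotected neighbour of a burning vertex, and then each firefighter moves to a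
vertex at distance at most `d` from its current vertex in the subgraph induced by the
unburnt vertices (i.e. along a walk of length ≤ `d` through unburnt vertices).
Occupied vertices are protected forever.  The fire is contained if the burnt set
stabilizes after finitely many steps. -/

namespace Firefight

variable {V : Type*}

/-- The two-way infinite path: vertex set `ℤ` with `i` adjacent to `i+1`. -/
def intPath : SimpleGraph ℤ :=
  SimpleGraph.fromRel (fun i j => j = i + 1)


/- The burnt set can only grow, and on the path it grows by at most one vertex on each side per
step, so at time `T` it lies in `[u - T, u + T]`. Two firefighters placed at `u - 1` and `u + 1`
seal off `u` at once. A single firefighter starts on one side of `u`; since `u` burns forever and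
moves run through unburnt vertices only, it can never cross to the other side, so the fire runs
along the other ray unchecked and reaches `u ± (T + 1)` at time `T + 1`; with no firefighter at
all this is immediate. -/

section Burnt

variable {G : SimpleGraph V} {F : Set V} {prot : ℕ → Set V}

lemma burnt_mono {s t : ℕ} (h : s ≤ t) : burnt G F prot s ⊆ burnt G F prot t := by
  induction h with
  | refl => rfl
  | step _ ih => exact ih.trans Set.subset_union_left

lemma subset_burnt (t : ℕ) : F ⊆ burnt G F prot t :=
  burnt_mono (Nat.zero_le t)

lemma burnt_subset {S : ℕ → Set V} (h0 : F ⊆ S 0) (hS : ∀ t, S t ⊆ S (t + 1))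
    (hspread : ∀ t w v, w ∈ S t → G.Adj w v → v ∉ prot t → v ∈ S (t + 1)) :
    ∀ t, burnt G F prot t ⊆ S t
  | 0 => h0
  | t + 1 => by
    rintro v (hv | ⟨hprot, w, hw, hadj⟩)
    · exact hS t (burnt_subset h0 hS hspread t hv)
    · exact hspread t w v (burnt_subset h0 hS hspread t hw) hadj hprot

lemma mem_burnt_of_chain {x : ℕ → V} (h0 : x 0 ∈ F) (hadj : ∀ t, G.Adj (x t) (x (t + 1)))
    (hprot : ∀ t, x (t + 1) ∉ prot t) : ∀ t, x t ∈ burnt G F prot t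
  | 0 => h0
  | t + 1 => Or.inr ⟨hprot t, x t, mem_burnt_of_chain h0 hadj hprot t, hadj t⟩

end Burnt

lemma canContain_of_neighborSet_subset {G : SimpleGraph V} {d k : ℕ} {u : V}
    (guard : Fin k → V) (hguard : G.neighborSet u ⊆ Set.range guard) (hne : ∀ i, guard i ≠ u) :
    CanContain G d k {u} := by
  have hburnt : ∀ t, burnt G {u} (protOf fun _ => guard) t ⊆ {u} := by
    refine burnt_subset subset_rfl (fun _ => subset_rfl) ?_
    rintro t w v rfl hadj hv
    obtain ⟨i, rfl⟩ := hguard hadj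
    exact absurd ⟨0, Nat.zero_le t, i, rfl⟩ hv
  refine ⟨0, fun _ => guard, hne, fun t i => ⟨.nil, Nat.zero_le d, ?_⟩, fun t => hburnt t⟩
  rintro x hx hburn
  rw [SimpleGraph.Walk.support_nil, List.mem_singleton] at hx
  subst hx
  exact hne i (hburnt (t + 1) hburn)

section IntPath

lemma intPath_adj {a b : ℤ} : intPath.Adj a b ↔ b = a + 1 ∨ a = b + 1 := by
  rw [intPath, SimpleGraph.fromRel_adj]
  omega

lemma lt_iff_lt_of_walk {u a b : ℤ} (p : intPath.Walk a b) (hu : u ∉ p.support) :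
    a < u ↔ b < u := by
  induction p with
  | nil => rfl
  | @cons a c b hadj q ih =>
    rw [SimpleGraph.Walk.support_cons, List.mem_cons, not_or] at hu
    have hc : c ≠ u := fun h => hu.2 (h ▸ q.start_mem_support)
    rw [← ih hu.2]
    rcases intPath_adj.mp hadj with h | h <;> omega

variable {u : ℤ} {prot : ℕ → Set ℤ}

lemma burnt_intPath_subset_Icc (t : ℕ) :
    burnt intPath {u} prot t ⊆ Set.Icc (u - t) (u + t) := by
  refine burnt_subset (S := fun t : ℕ => Set.Icc (u - t) (u + t)) (by simp)
    (fun t => Set.Icc_subset_Icc (by push_cast; omega) (by push_cast; omega)) ?_ t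
  intro t w v hw hadj _
  simp only [Set.mem_Icc] at hw ⊢
  push_cast
  rcases intPath_adj.mp hadj with h | h <;> omega

lemma not_burnt_stable_of_unprotected_ray {ε : ℤ} (hε : ε = 1 ∨ ε = -1)
    (hray : ∀ t : ℕ, u + ε * (t + 1) ∉ prot t) (T : ℕ) :
    ¬ burnt intPath {u} prot (T + 1) ⊆ burnt intPath {u} prot T := by
  intro hstable
  have hburn : ∀ t : ℕ, u + ε * t ∈ burnt intPath {u} prot t := by
    refine mem_burnt_of_chain (by simp) (fun t => ?_) (fun t => by exact_mod_cast hray t)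
    rw [intPath_adj]
    rcases hε with rfl | rfl <;> push_cast <;> omega
  have := burnt_intPath_subset_Icc T (hstable (hburn (T + 1)))
  simp only [Set.mem_Icc] at this
  rcases hε with rfl | rfl <;> push_cast at this <;> omega

lemma not_canContain_of_le_one {d k : ℕ} (hk : k ≤ 1) :
    ¬ CanContain intPath d k {u} := by
  rintro ⟨T, pos, hinit, hmove, hstable⟩
  have hside : ∀ t i, pos t i < u ↔ pos 0 i < u := by
    intro t i
    induction t with
    | zero => rfl
    | succ t ih =>
      obtain ⟨p, -, hp⟩ := hmove t i
      exact (lt_iff_lt_of_walk p fun hu => hp u hu (subset_burnt (t + 1) rfl)).symm.trans ih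
  obtain ⟨ε, hε, hfree⟩ : ∃ ε : ℤ, (ε = 1 ∨ ε = -1) ∧ ∀ i, ε * (pos 0 i - u) < 0 := by
    obtain rfl | rfl : k = 0 ∨ k = 1 := by omega
    · exact ⟨1, Or.inl rfl, fun i => i.elim0⟩
    · rcases lt_or_gt_of_ne (hinit 0) with h | h
      · exact ⟨1, Or.inl rfl, fun i => by rw [Subsingleton.elim i 0]; omega⟩
      · exact ⟨-1, Or.inr rfl, fun i => by rw [Subsingleton.elim i 0]; omega⟩
  refine not_burnt_stable_of_unprotected_ray hε (fun t => ?_) T (hstable (T + 1))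
  rintro ⟨s, -, i, hi⟩
  have := hside s i
  have := hfree i
  rcases hε with rfl | rfl <;> omega

end IntPath

/-- For every integer `d ≥ 1`, on the two-way infinite path two firefighters can contain a
fire starting at any vertex, but one firefighter cannot: `f_d = 2` for every `d`. -/
theorem two_way_path_fd :
    ∀ d : ℕ, 1 ≤ d → ∀ u : ℤ,
      CanContain intPath d 2 {u} ∧ ¬ CanContain intPath d 1 {u} ∧
      fdNum intPath d u = 2 := by
  intro d _ u
  have hcontain : CanContain intPath d 2 {u} := by
    refine canContain_of_neighborSet_subset ![u - 1, u + 1] (fun v hv => ?_) (by simp)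
    rcases intPath_adj.mp hv with rfl | rfl
    · exact ⟨1, rfl⟩
    · exact ⟨0, by simp⟩
  refine ⟨hcontain, not_canContain_of_le_one le_rfl, ?_⟩
  refine le_antisymm (Nat.sInf_le hcontain) (le_csInf ⟨2, hcontain⟩ fun k hk => ?_)
  by_contra! hk2
  exact not_canContain_of_le_one (by omega) hk

end Firefight
end

section
/- Let m ≥ 3 and let S_m be the graph consisting of a centre vertex u together with m pairwise-disjoint one-way infinite rays, where u is adjacent to the initial vertex of each ray. Then in the ordinary firefighter game one firefighter can contain a fire starting at u, i.e. f(S_m, u) = 1, while in the distance-restricted game f_d(S_m, u) = m for every integer d ≥ 1. -/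
/- Distance-restricted firefighter game (Burgess, Marcoux, Pike, arXiv:2204.01908).

At time 0 a fire breaks out at the set `F` of vertices and each firefighter is placed on
(protects) a vertex not in `F`.  At each subsequent time step the fire spreads to every
unburnt, unprotected neighbour of a burning vertex, and then each firefighter moves to a
vertex at distance at most `d` from its current vertex in the subgraph induced by the
unburnt vertices (i.e. along a walk of length ≤ `d` through unburnt vertices).
Occupied vertices are protected forever.  The fire is contained if the burnt set
stabilizes after finitely many steps. -/

namespace Firefight

variable {V : Type*}

/-- The ordinary (unrestricted) firefighter game: on each turn the `k` firefighters may
protect any `k` unburnt vertices (protecting an already protected vertex wastes a move,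
so this also allows protecting fewer). -/
def CanContainFree (G : SimpleGraph V) (k : ℕ) (F : Set V) : Prop :=
  ∃ pos : ℕ → Fin k → V,
    (∀ t i, pos t i ∉ burnt G F (protOf pos) t) ∧
    ∃ T, ∀ t, burnt G F (protOf pos) t ⊆ burnt G F (protOf pos) T

/-- The ordinary firefighter number `f(G,u)`. -/
noncomputable def ffNum (G : SimpleGraph V) (u : V) : ℕ :=
  sInf {k | CanContainFree G k {u}}

/-- The graph `S_m`: a centre vertex (`none`) together with `m` pairwise-disjoint one-way
infinite rays, the centre being adjacent to the initial vertex of each ray. -/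
def starRays (m : ℕ) : SimpleGraph (Option (Fin m × ℕ)) :=
  SimpleGraph.fromRel (fun p q =>
    (p = none ∧ ∃ j : Fin m, q = some (j, 0)) ∨
    (∃ (j : Fin m) (n : ℕ), p = some (j, n) ∧ q = some (j, n + 1)))

/-
In the ordinary game a single firefighter protects, at time `j`, the vertex at depth `j` of
ray `j`. The fire needs `j + 1` steps to reach depth `j`, so on ray `j` only the `j` vertices
in front of the protected one ever burn.

In the distance-restricted game the centre burns at time `0`, and every ray meets the rest of
the graph only at the centre, so a firefighter can never leave the ray it starts on. A ray
without a firefighter burns completely, so `m` firefighters are needed; `m` firefighters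
standing still on the first vertices of the rays contain the fire at once.
-/

open SimpleGraph

theorem burnt_mono_s14 (G : SimpleGraph V) (F : Set V) (prot : ℕ → Set V) :
    Monotone (burnt G F prot) :=
  monotone_nat_of_le_succ fun _ => Set.subset_union_left

theorem burnt_subset_of_spread {G : SimpleGraph V} {F : Set V} {prot : ℕ → Set V}
    (B : ℕ → Set V) (h0 : F ⊆ B 0) (hB : ∀ t, B t ⊆ B (t + 1))
    (hspread : ∀ t, ∀ w ∈ B t, ∀ v, G.Adj w v → v ∉ prot t → v ∈ B (t + 1)) :
    ∀ t, burnt G F prot t ⊆ B t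
  | 0 => h0
  | t + 1 => by
    rintro v (hv | ⟨hvp, w, hw, hwv⟩)
    · exact hB t (burnt_subset_of_spread B h0 hB hspread t hv)
    · exact hspread t w (burnt_subset_of_spread B h0 hB hspread t hw) v hwv hvp

section starRays

variable {m : ℕ}

theorem starRays_adj_none {v : Option (Fin m × ℕ)} :
    (starRays m).Adj none v ↔ ∃ j, v = some (j, 0) := by
  cases v <;> simp [starRays, eq_comm]

theorem starRays_adj_some {j : Fin m} {n : ℕ} {v : Option (Fin m × ℕ)} :
    (starRays m).Adj (some (j, n)) v ↔
      (n = 0 ∧ v = none) ∨ v = some (j, n + 1) ∨ ∃ k, n = k + 1 ∧ v = some (j, k) := by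
  cases v <;> grind [starRays, fromRel_adj]

theorem starRays_walk_map_fst_eq {x y : Option (Fin m × ℕ)} (p : (starRays m).Walk x y)
    (hp : none ∉ p.support) : x.map Prod.fst = y.map Prod.fst := by
  induction p with
  | nil => rfl
  | @cons x z y hadj p ih =>
    rw [Walk.support_cons, List.mem_cons, not_or] at hp
    rw [← ih hp.2]
    rcases x with _ | ⟨j, n⟩
    · exact absurd rfl hp.1
    rcases starRays_adj_some.1 hadj with ⟨-, rfl⟩ | rfl | ⟨k, -, rfl⟩
    · exact absurd p.start_mem_support hp.2
    · rfl
    · rfl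

theorem burnt_starRays_subset (prot : ℕ → Set (Option (Fin m × ℕ))) (t : ℕ) :
    burnt (starRays m) {none} prot t ⊆ {none} ∪ {v | ∃ j, ∃ n < t, v = some (j, n)} := by
  refine burnt_subset_of_spread (fun t => {none} ∪ {v | ∃ j, ∃ n < t, v = some (j, n)})
    Set.subset_union_left ?_ ?_ t
  · rintro t v (hv | ⟨j, n, hn, rfl⟩)
    · exact Or.inl hv
    · exact Or.inr ⟨j, n, by omega, rfl⟩
  · rintro t w (rfl | ⟨j, n, hn, rfl⟩) v hwv -
    · obtain ⟨j, rfl⟩ := starRays_adj_none.1 hwv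
      exact Or.inr ⟨j, 0, by omega, rfl⟩
    · rcases starRays_adj_some.1 hwv with ⟨-, rfl⟩ | rfl | ⟨k, rfl, rfl⟩
      · exact Or.inl rfl
      · exact Or.inr ⟨j, n + 1, by omega, rfl⟩
      · exact Or.inr ⟨j, k, by omega, rfl⟩

theorem some_mem_burnt_starRays {prot : ℕ → Set (Option (Fin m × ℕ))} {j : Fin m} :
    ∀ {n : ℕ}, (∀ k ≤ n, some (j, k) ∉ prot k) →
      some (j, n) ∈ burnt (starRays m) {none} prot (n + 1)
  | 0, h => Or.inr ⟨h 0 le_rfl, none, rfl, starRays_adj_none.2 ⟨j, rfl⟩⟩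
  | n + 1, h => Or.inr ⟨h (n + 1) le_rfl, some (j, n),
      some_mem_burnt_starRays fun k hk => h k (by omega),
      starRays_adj_some.2 (Or.inr (Or.inl rfl))⟩

theorem not_contained_of_forall_notMem_prot {prot : ℕ → Set (Option (Fin m × ℕ))} {j : Fin m}
    (hj : ∀ n, some (j, n) ∉ prot n) (T : ℕ) :
    ¬ ∀ t, burnt (starRays m) {none} prot t ⊆ burnt (starRays m) {none} prot T := by
  intro hT
  rcases burnt_starRays_subset prot T (hT (T + 1) (some_mem_burnt_starRays fun k _ => hj k))
    with h | ⟨j', n, hn, h⟩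
  · simp at h
  · obtain ⟨-, rfl⟩ := Prod.mk.inj (Option.some.inj h)
    omega

theorem canContain_starRays_self (d : ℕ) : CanContain (starRays m) d m {none} := by
  set pos : ℕ → Fin m → Option (Fin m × ℕ) := fun _ i => some (i, 0)
  have hburnt : ∀ t, burnt (starRays m) {none} (protOf pos) t ⊆ {none} :=
    burnt_subset_of_spread (fun _ => {none}) subset_rfl (fun _ => subset_rfl) (by
      rintro t w rfl v hwv hv
      obtain ⟨j, rfl⟩ := starRays_adj_none.1 hwv
      exact (hv ⟨0, t.zero_le, j, rfl⟩).elim)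
  refine ⟨0, pos, fun i => by simp [pos], fun t i => ⟨Walk.nil, d.zero_le, ?_⟩, hburnt⟩
  rintro x hx hxb
  rw [Walk.support_nil, List.mem_singleton] at hx
  subst hx
  simpa [pos] using hburnt (t + 1) hxb

theorem le_of_canContain_starRays {d k : ℕ} (h : CanContain (starRays m) d k {none}) :
    m ≤ k := by
  obtain ⟨T, pos, -, hmove, hT⟩ := h
  have hray : ∀ t i, (pos t i).map Prod.fst = (pos 0 i).map Prod.fst := by
    intro t i
    induction t with
    | zero => rfl
    | succ t ih =>
      obtain ⟨p, -, hp⟩ := hmove t i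
      rw [← ih, starRays_walk_map_fst_eq p fun hn => hp none hn
        (burnt_mono_s14 _ _ _ (t + 1).zero_le rfl)]
  have hcover : ∀ j : Fin m, ∃ i, (pos 0 i).map Prod.fst = some j := by
    intro j
    by_contra! hj
    refine not_contained_of_forall_notMem_prot (j := j) (fun n hn => ?_) T hT
    obtain ⟨s, -, i, hi⟩ := hn
    exact hj i (by rw [← hray s i, hi]; rfl)
  choose g hg using hcover
  have hg_inj : Function.Injective g := fun j j' h =>
    Option.some.inj ((hg j).symm.trans (h ▸ hg j'))
  simpa using Fintype.card_le_of_injective g hg_inj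

theorem fdNum_starRays (d : ℕ) : fdNum (starRays m) d none = m :=
  IsLeast.csInf_eq ⟨canContain_starRays_self d, fun _ => le_of_canContain_starRays⟩

def diagonalStrategy (m : ℕ) : ℕ → Fin 1 → Option (Fin (m + 1) × ℕ) :=
  fun t _ => some (Fin.clamp t m, min t m)

theorem mem_protOf_diagonalStrategy {t : ℕ} {v : Option (Fin (m + 1) × ℕ)} :
    v ∈ protOf (diagonalStrategy m) t ↔
      ∃ j : Fin (m + 1), (j : ℕ) ≤ t ∧ v = some (j, (j : ℕ)) := by
  constructor
  · rintro ⟨s, hs, -, rfl⟩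
    exact ⟨Fin.clamp s m, by rw [Fin.coe_clamp]; omega, rfl⟩
  · rintro ⟨j, hj, rfl⟩
    have hjm : min (j : ℕ) m = j := min_eq_left (Nat.lt_succ_iff.1 j.is_lt)
    exact ⟨j, hj, 0, by simp [diagonalStrategy, Fin.ext_iff, hjm]⟩

theorem burnt_diagonalStrategy_subset (t : ℕ) :
    burnt (starRays (m + 1)) {none} (protOf (diagonalStrategy m)) t ⊆
      {none} ∪ {v | ∃ j : Fin (m + 1), ∃ n < (j : ℕ), n < t ∧ v = some (j, n)} := by
  refine burnt_subset_of_spread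
    (fun t => {none} ∪ {v | ∃ j : Fin (m + 1), ∃ n < (j : ℕ), n < t ∧ v = some (j, n)})
    Set.subset_union_left ?_ ?_ t
  · rintro t v (hv | ⟨j, n, hnj, hn, rfl⟩)
    · exact Or.inl hv
    · exact Or.inr ⟨j, n, hnj, by omega, rfl⟩
  · rintro t w (rfl | ⟨j, n, hnj, hn, rfl⟩) v hwv hv
    · obtain ⟨j, rfl⟩ := starRays_adj_none.1 hwv
      rcases Nat.eq_zero_or_pos j with hj | hj
      · exact (hv (mem_protOf_diagonalStrategy.2 ⟨j, by omega, by rw [hj]⟩)).elim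
      · exact Or.inr ⟨j, 0, hj, by omega, rfl⟩
    · rcases starRays_adj_some.1 hwv with ⟨-, rfl⟩ | rfl | ⟨k, rfl, rfl⟩
      · exact Or.inl rfl
      · rcases Nat.lt_or_ge (n + 1) j with hj | hj
        · exact Or.inr ⟨j, n + 1, hj, by omega, rfl⟩
        · have hjn : (j : ℕ) = n + 1 := by omega
          exact (hv (mem_protOf_diagonalStrategy.2 ⟨j, by omega, by rw [hjn]⟩)).elim
      · exact Or.inr ⟨j, k, by omega, by omega, rfl⟩

theorem canContainFree_diagonalStrategy : CanContainFree (starRays (m + 1)) 1 {none} := by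
  refine ⟨diagonalStrategy m, fun t i hburnt => ?_, m + 1, fun t v hv => ?_⟩
  · rcases burnt_diagonalStrategy_subset t hburnt with h | ⟨j, n, hnj, -, h⟩
    · simp [diagonalStrategy] at h
    · obtain ⟨rfl, rfl⟩ := Prod.mk.inj (Option.some.inj h)
      simp [Fin.clamp] at hnj
  · rcases burnt_diagonalStrategy_subset t hv with h | ⟨j, n, hnj, -, rfl⟩
    · exact burnt_mono_s14 _ _ _ (m + 1).zero_le h
    · refine burnt_mono_s14 _ _ _ (by omega : n + 1 ≤ m + 1)
        (some_mem_burnt_starRays fun k hk hp => ?_)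
      obtain ⟨j', -, h⟩ := mem_protOf_diagonalStrategy.1 hp
      obtain ⟨rfl, rfl⟩ := Prod.mk.inj (Option.some.inj h)
      omega

theorem one_le_of_canContainFree_starRays {k : ℕ}
    (h : CanContainFree (starRays (m + 1)) k {none}) : 1 ≤ k := by
  obtain ⟨pos, -, T, hT⟩ := h
  refine Nat.one_le_iff_ne_zero.2 fun hk => ?_
  subst hk
  refine not_contained_of_forall_notMem_prot (j := 0) (fun n hn => ?_) T hT
  obtain ⟨-, -, i, -⟩ := hn
  exact i.elim0

theorem ffNum_starRays : ffNum (starRays (m + 1)) none = 1 :=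
  IsLeast.csInf_eq ⟨canContainFree_diagonalStrategy, fun _ => one_le_of_canContainFree_starRays⟩

end starRays

/-- For `m ≥ 3`: in the ordinary firefighter game one firefighter can contain a fire
starting at the centre `u` of `S_m`, i.e. `f(S_m, u) = 1`, while in the distance-restricted
game `f_d(S_m, u) = m` for every integer `d ≥ 1`. -/
theorem star_of_rays_numbers :
    ∀ m : ℕ, 3 ≤ m →
      ffNum (starRays m) (none : Option (Fin m × ℕ)) = 1 ∧
      ∀ d : ℕ, 1 ≤ d → fdNum (starRays m) d (none : Option (Fin m × ℕ)) = m := by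
  intro m hm
  obtain ⟨m, rfl⟩ : ∃ m', m = m' + 1 := ⟨m - 1, by omega⟩
  exact ⟨ffNum_starRays, fun d _ => fdNum_starRays d⟩

end Firefight
end

section
/- For every integer d ≥ 1 and every positive integer N, there exist graphs G and H with H a subgraph of G and a vertex u ∈ V(H) ⊆ V(G) such that f_d(H,u) − f_d(G,u) ≥ N and f_d(H,u)/f_d(G,u) ≥ N. In particular, the distance-restricted firefighter number of a subgraph is not bounded above by that of the original graph. -/
/- Distance-restricted firefighter game (Burgess, Marcoux, Pike, arXiv:2204.01908).

At time 0 a fire breaks out at the set `F` of vertices and each firefighter is placed on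
(protects) a vertex not in `F`.  At each subsequent time step the fire spreads to every
unburnt, unprotected neighbour of a burning vertex, and then each firefighter moves to a
vertex at distance at most `d` from its current vertex in the subgraph induced by the
unburnt vertices (i.e. along a walk of length ≤ `d` through unburnt vertices).
Occupied vertices are protected forever.  The fire is contained if the burnt set
stabilizes after finitely many steps. -/

namespace Firefight

variable {V : Type*}

/-! The subgraph `H` is a spider with `N + 1` infinite legs and body `u`. The body burns at
time 0 and separates the legs, so every firefighter stays on the leg it starts on, and a leg
without a firefighter burns forever: `f_d(H, u) = N + 1`. The graph `G` adds a clique on the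
vertices at distance `N + 2` from `u`. A single firefighter walks through this clique, one vertex
per turn, and protects all of it before the fire (which needs `N + 2` turns to get there)
arrives, so the fire stays inside a finite ball: `f_d(G, u) = 1`. -/

section Game

variable {G : SimpleGraph V} {F : Set V} {p : ℕ → Set V} {S : Set V} {d k : ℕ} {u v : V}

lemma burnt_mono_s15 : Monotone (burnt G F p) :=
  monotone_nat_of_le_succ fun _ => Set.subset_union_left

lemma height_le_of_mem_burnt (h : V → ℕ) (hF : ∀ v ∈ F, h v = 0)
    (hadj : ∀ v w, G.Adj v w → h w ≤ h v + 1) :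
    ∀ {t v}, v ∈ burnt G F p t → h v ≤ t
  | 0, v, hv => (hF v hv).le
  | t + 1, _, .inl hv => (height_le_of_mem_burnt h hF hadj hv).trans t.le_succ
  | _ + 1, v, .inr ⟨_, w, hw, hwv⟩ =>
    (hadj w v hwv).trans (Nat.succ_le_succ (height_le_of_mem_burnt h hF hadj hw))

lemma ray_subset_burnt (f : ℕ → V) (h0 : G.Adj u (f 0))
    (hstep : ∀ n, G.Adj (f n) (f (n + 1))) (hprot : ∀ t n, f n ∉ p t) :
    ∀ n, f n ∈ burnt G {u} p (n + 1)
  | 0 => .inr ⟨hprot 0 0, u, rfl, h0⟩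
  | n + 1 => .inr ⟨hprot _ _, f n, ray_subset_burnt f h0 hstep hprot n, hstep n⟩

lemma not_burnt_subset_of_unprotected_ray (h : V → ℕ) (hu : h u = 0)
    (hadj : ∀ v w, G.Adj v w → h w ≤ h v + 1) (f : ℕ → V) (hf : ∀ n, h (f n) = n + 1)
    (h0 : G.Adj u (f 0)) (hstep : ∀ n, G.Adj (f n) (f (n + 1))) (hprot : ∀ t n, f n ∉ p t)
    (T : ℕ) : ¬ ∀ t, burnt G {u} p t ⊆ burnt G {u} p T := fun hT => by
  have := height_le_of_mem_burnt h (by rintro v rfl; exact hu) hadj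
    (hT _ (ray_subset_burnt f h0 hstep hprot (T + 1)))
  rw [hf] at this
  omega

lemma exists_burnt_subset_of_finite {B : Set V} (hB : B.Finite)
    (hsub : ∀ t, burnt G F p t ⊆ B) :
    ∃ T, ∀ t, burnt G F p t ⊆ burnt G F p T := by
  have hU : (⋃ t, burnt G F p t).Finite := hB.subset (Set.iUnion_subset hsub)
  have hdir := (burnt_mono_s15 : Monotone (burnt G F p)).directed_le
  obtain ⟨T, hT⟩ := hdir.exists_mem_subset_of_finset_subset_biUnion (s := hU.toFinset)
    (by rw [hU.coe_toFinset])
  exact ⟨T, fun t => (Set.subset_iUnion _ t).trans (by simpa using hT)⟩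

lemma fdNum_eq_of_canContain (hk : CanContain G d k {u})
    (hlt : ∀ j < k, ¬ CanContain G d j {u}) : fdNum G d u = k :=
  le_antisymm (Nat.sInf_le hk) (le_csInf ⟨k, hk⟩ fun _ hj => not_lt.1 fun h => hlt _ h hj)

lemma ReachWithin.refl (hu : u ∈ S) : ReachWithin G S d u u :=
  ⟨.nil, by simp, by simpa using hu⟩

lemma ReachWithin.of_adj (hd : 1 ≤ d) (h : G.Adj u v) (hu : u ∈ S) (hv : v ∈ S) :
    ReachWithin G S d u v :=
  ⟨.cons h .nil, by simpa using hd, by simp [hu, hv]⟩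

section Iso

variable {W : Type*} {G' : SimpleGraph W} (e : G ≃g G')

lemma burnt_image_iso :
    ∀ t, burnt G' (e '' F) (fun s => e '' p s) t = e '' burnt G F p t
  | 0 => rfl
  | t + 1 => by
    simp only [burnt, burnt_image_iso t, Set.image_union]
    congr 1
    ext v
    obtain ⟨v, rfl⟩ := e.surjective v
    simp only [Set.mem_image, Set.mem_ofPred_eq, EmbeddingLike.apply_eq_iff_eq, exists_eq_right,
      e.map_adj_iff, exists_exists_and_eq_and]

lemma protOf_comp_iso (pos : ℕ → Fin k → V) (t : ℕ) :
    protOf (fun s i => e (pos s i)) t = e '' protOf pos t := by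
  ext v
  simp only [protOf, Set.mem_image]
  grind

lemma ReachWithin.map_iso (h : ReachWithin G S d u v) :
    ReachWithin G' (e '' S) d (e u) (e v) := by
  obtain ⟨w, hlen, hS⟩ := h
  refine ⟨w.map e.toHom, by simpa using hlen, ?_⟩
  simp only [SimpleGraph.Walk.support_map, List.mem_map]
  rintro _ ⟨x, hx, rfl⟩
  exact Set.mem_image_of_mem _ (hS x hx)

lemma CanContain.map_iso (h : CanContain G d k F) : CanContain G' d k (e '' F) := by
  obtain ⟨T, pos, h0, hmove, hT⟩ := h
  have hburnt : ∀ t, burnt G' (e '' F) (protOf fun s i => e (pos s i)) t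
      = e '' burnt G F (protOf pos) t := by
    simpa only [← protOf_comp_iso] using burnt_image_iso e (F := F) (p := protOf pos)
  refine ⟨T, fun s i => e (pos s i), fun i => ?_, fun t i => ?_, fun t => ?_⟩
  · simpa [e.injective.mem_set_image] using h0 i
  · rw [hburnt, ← Set.image_compl_eq e.bijective]
    exact (hmove t i).map_iso e
  · simpa only [hburnt] using Set.image_mono (hT t)

lemma fdNum_iso (d : ℕ) (u : V) : fdNum G' d (e u) = fdNum G d u := by
  unfold fdNum
  congr 1
  ext k
  refine ⟨fun h => ?_, fun h => by simpa using h.map_iso e⟩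
  simpa using h.map_iso e.symm

end Iso

end Game

/-- `none` is the body of the spider and `some (i, m)` the vertex at distance `m + 1` from it
on leg `i`. -/
abbrev SpiderVertex (n : ℕ) := Option (Fin n × ℕ)

section Spider

variable {n : ℕ}

def level : SpiderVertex n → ℕ
  | none => 0
  | some (_, m) => m + 1

def leg : SpiderVertex n → Option (Fin n) := Option.map Prod.fst

variable (n) in
def spider : SimpleGraph (SpiderVertex n) :=
  SimpleGraph.fromRel fun a b => level b = level a + 1 ∧ (a = none ∨ leg a = leg b)

variable (n) in
def levelClique (L : ℕ) : SimpleGraph (SpiderVertex n) :=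
  SimpleGraph.fromRel fun a b => level a = L ∧ level b = L

lemma eq_some_of_level_eq_succ {v : SpiderVertex n} {m : ℕ} (h : level v = m + 1) :
    ∃ i, v = some (i, m) := by
  rcases v with _ | ⟨i, m'⟩
  · cases h
  · exact ⟨i, by simp_all [level]⟩

lemma finite_setOf_level_le (L : ℕ) : {v : SpiderVertex n | level v ≤ L}.Finite := by
  refine (((Set.finite_univ.prod (Set.finite_Iio L)).image some).insert none).subset ?_
  rintro (_ | ⟨i, m⟩) h
  · exact Set.mem_insert _ _
  · simp only [Set.mem_ofPred_eq, level] at h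
    exact Set.mem_insert_of_mem _ ⟨(i, m), ⟨trivial, Set.mem_Iio.2 (by omega)⟩, rfl⟩

lemma spider_adj_root (i : Fin n) : (spider n).Adj none (some (i, 0)) :=
  ⟨by simp, .inl ⟨rfl, .inl rfl⟩⟩

lemma spider_adj_succ (i : Fin n) (m : ℕ) : (spider n).Adj (some (i, m)) (some (i, m + 1)) :=
  ⟨by simp, .inl ⟨rfl, .inr rfl⟩⟩

lemma level_le_of_adj {L : ℕ} {a b : SpiderVertex n}
    (h : (spider n ⊔ levelClique n L).Adj a b) :
    level b ≤ level a + 1 := by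
  rcases h with ⟨-, ⟨h, -⟩ | ⟨h, -⟩⟩ | ⟨-, ⟨h, h'⟩ | ⟨h, h'⟩⟩ <;> omega

lemma leg_eq_of_spider_adj {a b : SpiderVertex n} (h : (spider n).Adj a b) (ha : a ≠ none)
    (hb : b ≠ none) : leg a = leg b := by
  rcases h with ⟨-, ⟨-, h | h⟩ | ⟨-, h | h⟩⟩
  exacts [absurd h ha, h, absurd h hb, h.symm]

lemma leg_eq_of_walk {a b : SpiderVertex n} (w : (spider n).Walk a b) (hw : none ∉ w.support) :
    leg a = leg b := by
  induction w with
  | nil => rfl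
  | cons h w ih =>
    simp only [SimpleGraph.Walk.support_cons, List.mem_cons, not_or] at hw
    exact (leg_eq_of_spider_adj h (Ne.symm hw.1) fun hb => hw.2 (hb ▸ w.start_mem_support)).trans
      (ih hw.2)

lemma burnt_spider_subset_root (t : ℕ) :
    burnt (spider n) {none} (protOf fun _ i => some (i, 0)) t ⊆ {none} := by
  induction t with
  | zero => exact subset_rfl
  | succ t ih =>
    rintro v (hv | ⟨hv, w, hw, hwv⟩)
    · exact ih hv
    · obtain rfl : w = none := ih hw
      rcases hwv with ⟨-, ⟨h, -⟩ | ⟨h, -⟩⟩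
      · obtain ⟨i, rfl⟩ := eq_some_of_level_eq_succ h
        exact absurd ⟨0, t.zero_le, i, rfl⟩ hv
      · cases h

lemma canContain_spider (d : ℕ) : CanContain (spider n) d n {none} := by
  refine ⟨0, fun _ i => some (i, 0), fun _ => by simp, fun t _ => .refl fun h => ?_,
    burnt_spider_subset_root⟩
  cases burnt_spider_subset_root (t + 1) h

lemma not_canContain_spider {d k : ℕ} (hk : k < n) : ¬ CanContain (spider n) d k {none} := by
  rintro ⟨T, pos, -, hmove, hT⟩
  have hleg : ∀ t i, leg (pos t i) = leg (pos 0 i) := by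
    intro t i
    induction t with
    | zero => rfl
    | succ t ih =>
      obtain ⟨w, -, hw⟩ := hmove t i
      exact (leg_eq_of_walk w fun h => hw _ h (burnt_mono_s15 (t + 1).zero_le rfl)).symm.trans ih
  obtain ⟨_, hj, hfree⟩ := Finset.exists_mem_notMem_of_card_lt_card
    (s := Finset.univ.image fun i => leg (pos 0 i)) (t := Finset.univ.image some) (by
      rw [Finset.card_image_of_injective _ (Option.some_injective _)]
      exact Finset.card_image_le.trans_lt (by simpa using hk))
  obtain ⟨j, -, rfl⟩ := Finset.mem_image.1 hj
  refine not_burnt_subset_of_unprotected_ray level rfl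
    (fun _ _ h => level_le_of_adj (L := 0) (.inl h)) (fun m => some (j, m)) (fun _ => rfl)
    (spider_adj_root j) (spider_adj_succ j) ?_ T hT
  rintro t m ⟨s, -, i, hi⟩
  exact hfree (Finset.mem_image.2 ⟨i, Finset.mem_univ _, by rw [← hleg s i, hi]; rfl⟩)

lemma fdNum_spider (d : ℕ) : fdNum (spider n) d none = n :=
  fdNum_eq_of_canContain (canContain_spider d) fun _ => not_canContain_spider

variable [NeZero n]

variable (n) in
def sweep (t : ℕ) (_ : Fin 1) : SpiderVertex n := some (Fin.ofNat n t, n)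

lemma level_le_of_mem_burnt_sweep {t : ℕ} {v : SpiderVertex n}
    (hv : v ∈ burnt (spider n ⊔ levelClique n (n + 1)) {none} (protOf (sweep n)) t) :
    level v ≤ n := by
  induction t generalizing v with
  | zero => obtain rfl : v = none := hv; exact n.zero_le
  | succ t ih =>
    rcases hv with hv | ⟨hv, w, hw, hwv⟩
    · exact ih hv
    by_contra hlt
    have hwt := height_le_of_mem_burnt level (by rintro _ rfl; rfl)
      (fun _ _ => level_le_of_adj) hw
    have hvw := level_le_of_adj hwv
    have hwn := ih hw
    obtain ⟨i, rfl⟩ := eq_some_of_level_eq_succ (show level v = n + 1 by omega)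
    exact hv ⟨i, by omega, 0, by simp [sweep]⟩

lemma canContain_spider_sup_levelClique {d : ℕ} (hd : 1 ≤ d) :
    CanContain (spider n ⊔ levelClique n (n + 1)) d 1 {none} := by
  have hsafe : ∀ s i t, sweep n s i ∉
      burnt (spider n ⊔ levelClique n (n + 1)) {none} (protOf (sweep n)) t :=
    fun _ _ _ h => by simpa [sweep, level] using level_le_of_mem_burnt_sweep h
  obtain ⟨T, hT⟩ := exists_burnt_subset_of_finite (finite_setOf_level_le n)
    fun _ _ => level_le_of_mem_burnt_sweep
  refine ⟨T, sweep n, fun _ => by simp [sweep], fun t i => ?_, hT⟩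
  by_cases heq : sweep n t i = sweep n (t + 1) i
  · rw [← heq]
    exact .refl (hsafe _ _ _)
  · exact .of_adj hd (.inr ⟨heq, .inl ⟨rfl, rfl⟩⟩) (hsafe _ _ _) (hsafe _ _ _)

lemma fdNum_spider_sup_levelClique {d : ℕ} (hd : 1 ≤ d) :
    fdNum (spider n ⊔ levelClique n (n + 1)) d none = 1 := by
  refine fdNum_eq_of_canContain (canContain_spider_sup_levelClique hd) fun j hj => ?_
  obtain rfl : j = 0 := Nat.lt_one_iff.1 hj
  rintro ⟨T, pos, -, -, hT⟩
  exact not_burnt_subset_of_unprotected_ray level rfl (fun _ _ => level_le_of_adj)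
    (fun m => some (0, m)) (fun _ => rfl) (.inl (spider_adj_root 0))
    (fun m => .inl (spider_adj_succ 0 m)) (by rintro _ _ ⟨_, _, i, _⟩; exact i.elim0) T hT

end Spider

/-- For every `d ≥ 1` and every positive integer `N`, there are graphs `H ⊆ G` (same
ambient vertices, `H` on a vertex subset `S` with every edge of `H` an edge of `G`) and a
vertex `u` of `H` such that both the difference `f_d(H,u) − f_d(G,u)` and the ratio
`f_d(H,u) / f_d(G,u)` are at least `N`.  In particular the distance-restricted firefighter
number of a subgraph is not bounded above by that of the original graph. -/
theorem subgraph_gap_unbounded :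
    ∀ d : ℕ, 1 ≤ d → ∀ N : ℕ, 0 < N →
      ∃ (V : Type) (G : SimpleGraph V) (S : Set V) (H : SimpleGraph S) (u : S),
        (∀ a b : S, H.Adj a b → G.Adj a b) ∧
        0 < fdNum G d (u : V) ∧
        N ≤ fdNum H d u - fdNum G d (u : V) ∧
        N * fdNum G d (u : V) ≤ fdNum H d u := by
  intro d hd N _
  have hG := fdNum_spider_sup_levelClique (n := N + 1) hd
  have hH : fdNum ((spider (N + 1)).induce Set.univ) d ⟨none, trivial⟩ = N + 1 :=
    (fdNum_iso (SimpleGraph.induceUnivIso _) d _).symm.trans (fdNum_spider d)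
  refine ⟨SpiderVertex (N + 1), spider (N + 1) ⊔ levelClique (N + 1) (N + 2), Set.univ,
    (spider (N + 1)).induce Set.univ, ⟨none, trivial⟩, fun _ _ h => .inl h, ?_⟩
  rw [hG, hH]
  omega

end Firefight
end

section
/- Let G be a connected graph and u a vertex of G such that f(G,u) is finite (so finitely many firefighters can contain a fire starting at u in finitely many turns). Then there exists an integer d such that for every δ ≥ d, f*_δ(G,u) = f(G,u), where f*_δ denotes the distance-restricted firefighter number in the variant where firefighters may move through burnt vertices (distances between consecutive positions are measured in the whole graph G). -/
/-! Take an optimal strategy of the ordinary game whose fire stops spreading at time `T`, and let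
the firefighters stand still from time `T` on: the burnt set is then the same as before up to time
`T` and never changes afterwards. Up to time `T` the firefighters make finitely many moves, each
between vertices at finite distance because `G` is connected, so for every `δ` at least the
longest of these the frozen strategy is legal in the move-through-fire game. Conversely every
strategy of that game is one of the ordinary game. -/

/- Distance-restricted firefighter game (Burgess, Marcoux, Pike, arXiv:2204.01908).

At time 0 a fire breaks out at the set `F` of vertices and each firefighter is placed on
(protects) a vertex not in `F`.  At each subsequent time step the fire spreads to every
unburnt, unprotected neighbour of a burning vertex, and then each firefighter moves to a
vertex at distance at most `d` from its current vertex in the subgraph induced by the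
unburnt vertices (i.e. along a walk of length ≤ `d` through unburnt vertices).
Occupied vertices are protected forever.  The fire is contained if the burnt set
stabilizes after finitely many steps. -/

namespace Firefight

variable {V : Type*}

/-- The distance-restricted game in the variant where firefighters may move through burnt
vertices: between consecutive time steps each firefighter moves along a walk of length at
most `d` in the whole graph `G` (its distance in `G` is at most `d`), and every occupied
vertex must be unburnt at the time it is occupied. -/
def CanContainThru (G : SimpleGraph V) (d k : ℕ) (F : Set V) : Prop :=
  ∃ pos : ℕ → Fin k → V,
    (∀ t i, pos t i ∉ burnt G F (protOf pos) t) ∧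
    (∀ t i, ∃ p : G.Walk (pos t i) (pos (t + 1) i), p.length ≤ d) ∧
    ∃ T, ∀ t, burnt G F (protOf pos) t ⊆ burnt G F (protOf pos) T

/-- The firefighter number `f*_d(G,u)` of the move-through-fire variant. -/
noncomputable def fstarNum (G : SimpleGraph V) (d : ℕ) (u : V) : ℕ :=
  sInf {k | CanContainThru G d k {u}}

variable {G : SimpleGraph V} {F : Set V} {k : ℕ}

lemma burnt_congr (G : SimpleGraph V) (F : Set V) {p q : ℕ → Set V}
    (t : ℕ) (h : ∀ s < t, p s = q s) : burnt G F p t = burnt G F q t := by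
  induction t with
  | zero => rfl
  | succ t ih =>
    simp only [burnt, ih fun s hs => h s (hs.trans t.lt_succ_self), h t t.lt_succ_self]

lemma burnt_eq_of_protected_const {p : ℕ → Set V} {T t : ℕ} (hp : ∀ s, T ≤ s → p s = p T)
    (hT : burnt G F p (T + 1) ⊆ burnt G F p T) (ht : T ≤ t) :
    burnt G F p t = burnt G F p T := by
  induction t, ht using Nat.le_induction with
  | base => rfl
  | succ n hn ih =>
    have hstep : burnt G F p (n + 1) = burnt G F p (T + 1) := by
      simp only [burnt, ih, hp n hn]
    exact hstep.trans (hT.antisymm Set.subset_union_left)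

def freezeAfter (pos : ℕ → Fin k → V) (T : ℕ) : ℕ → Fin k → V :=
  fun t => pos (min t T)

lemma protOf_freezeAfter (pos : ℕ → Fin k → V) (T s : ℕ) :
    protOf (freezeAfter pos T) s = protOf pos (min s T) := by
  ext v
  constructor
  · rintro ⟨s', hs', i, rfl⟩
    exact ⟨min s' T, min_le_min_right T hs', i, rfl⟩
  · rintro ⟨s', hs', i, rfl⟩
    exact ⟨s', hs'.trans (min_le_left s T), i, by
      rw [freezeAfter, min_eq_left (hs'.trans (min_le_right s T))]⟩

lemma burnt_freezeAfter {pos : ℕ → Fin k → V} {T : ℕ}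
    (hT : ∀ t, burnt G F (protOf pos) t ⊆ burnt G F (protOf pos) T) (t : ℕ) :
    burnt G F (protOf (freezeAfter pos T)) t = burnt G F (protOf pos) (min t T) := by
  have hearly : ∀ t ≤ T + 1,
      burnt G F (protOf (freezeAfter pos T)) t = burnt G F (protOf pos) t :=
    fun t ht => burnt_congr G F t fun s hs => by
      rw [protOf_freezeAfter, min_eq_left (by omega)]
  rcases le_total t T with ht | ht
  · rw [min_eq_left ht, hearly t (by omega)]
  · have hconst : ∀ s, T ≤ s →
        protOf (freezeAfter pos T) s = protOf (freezeAfter pos T) T := fun s hs => by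
      rw [protOf_freezeAfter, protOf_freezeAfter, min_eq_right hs, min_self]
    have hstop : burnt G F (protOf (freezeAfter pos T)) (T + 1) ⊆
        burnt G F (protOf (freezeAfter pos T)) T := by
      rw [hearly (T + 1) le_rfl, hearly T (by omega)]
      exact hT (T + 1)
    rw [min_eq_right ht, burnt_eq_of_protected_const hconst hstop ht, hearly T (by omega)]

lemma CanContainThru.canContainFree {d : ℕ} (h : CanContainThru G d k F) :
    CanContainFree G k F :=
  let ⟨pos, hpos, _, hT⟩ := h
  ⟨pos, hpos, hT⟩

lemma CanContainThru.mono {d d' : ℕ} (h : CanContainThru G d k F) (hd : d ≤ d') :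
    CanContainThru G d' k F :=
  let ⟨pos, hpos, hmove, hT⟩ := h
  ⟨pos, hpos, fun t i => let ⟨p, hp⟩ := hmove t i; ⟨p, hp.trans hd⟩, hT⟩

lemma CanContainFree.exists_canContainThru (hG : G.Connected) (h : CanContainFree G k F) :
    ∃ d, CanContainThru G d k F := by
  obtain ⟨pos, hpos, T, hT⟩ := h
  let step : ℕ × Fin k → ℕ := fun p => G.dist (pos p.1 p.2) (pos (p.1 + 1) p.2)
  obtain ⟨d, hd⟩ : ∃ d, ∀ t < T, ∀ i, step (t, i) ≤ d :=
    ⟨(Finset.range T ×ˢ Finset.univ).sup step, fun t ht i =>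
      Finset.le_sup (Finset.mem_product.mpr ⟨Finset.mem_range.mpr ht, Finset.mem_univ i⟩)⟩
  have hB := burnt_freezeAfter hT
  refine ⟨d, freezeAfter pos T, fun t i => ?_, fun t i => ?_, T, fun t => ?_⟩
  · rw [hB]
    exact hpos _ i
  · have hdist : G.dist (freezeAfter pos T t i) (freezeAfter pos T (t + 1) i) ≤ d := by
      rcases lt_or_ge t T with ht | ht
      · rw [freezeAfter, freezeAfter, min_eq_left ht.le, min_eq_left (Nat.succ_le_of_lt ht)]
        exact hd t ht i
      · rw [freezeAfter, freezeAfter, min_eq_right ht, min_eq_right (ht.trans t.le_succ),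
          SimpleGraph.dist_self]
        exact d.zero_le
    obtain ⟨p, hp⟩ := hG.exists_walk_length_eq_dist _ _
    exact ⟨p, hp ▸ hdist⟩
  · rw [hB, hB, min_self]
    exact hT _

lemma fstarNum_eq_ffNum {u : V} {d : ℕ} (h : CanContainThru G d (ffNum G u) {u}) :
    fstarNum G d u = ffNum G u :=
  le_antisymm (Nat.sInf_le h)
    (le_csInf ⟨_, h⟩ fun _ hb => Nat.sInf_le (CanContainThru.canContainFree hb))

/-- If `G` is connected and finitely many firefighters can contain a fire starting at `u`
in the ordinary game, then there is an integer `d` such that `f*_δ(G,u) = f(G,u)` for all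
`δ ≥ d`, where `f*_δ` is the distance-restricted firefighter number when firefighters may
move through burnt vertices. -/
theorem through_fire_eventually_ordinary
    {V : Type*} (G : SimpleGraph V) (u : V)
    (hconn : G.Connected) (hfin : ∃ k, CanContainFree G k {u}) :
    ∃ d : ℕ, ∀ δ : ℕ, d ≤ δ → fstarNum G δ u = ffNum G u := by
  have hopt : CanContainFree G (ffNum G u) {u} := Nat.sInf_mem hfin
  obtain ⟨d, hd⟩ := hopt.exists_canContainThru hconn
  exact ⟨d, fun δ hδ => fstarNum_eq_ffNum (hd.mono hδ)⟩

end Firefight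
end
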